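/- Let G be a connected simple graph with diameter d ≥ 3 that is not self-centered (rad(G) < diam(G)). Then the eccentricity matrix ε(G) has at least two positive eigenvalues. -/

import Mathlib

open Finset Polynomial

noncomputable def ecc {V : Type*} [Fintype V] (G : SimpleGraph V) (u : V) : ℕ :=
  Finset.univ.sup (G.dist u)

noncomputable def eccMatrix {V : Type*} [Fintype V] (G : SimpleGraph V) :
    Matrix V V ℝ := fun u v =>
  if G.dist u v = min (ecc G u) (ecc G v) then (G.dist u v : ℝ) else 0

theorem eccMatrix_isHermitian {V : Type*} [Fintype V] (G : SimpleGraph V) :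
    (eccMatrix G).IsHermitian := by
  unfold Matrix.IsHermitian
  ext u v
  simp only [Matrix.conjTranspose_apply, eccMatrix, star_trivial]
  rw [SimpleGraph.dist_comm, min_comm]

/-- Number of positive eigenvalues (with multiplicity) of a real symmetric matrix. -/
noncomputable def posEigCount {V : Type*} [Fintype V] [DecidableEq V]
    {A : Matrix V V ℝ} (hA : A.IsHermitian) : ℕ :=
  (Finset.univ.filter fun i => 0 < hA.eigenvalues i).card

/-- The join of two simple graphs: disjoint union plus all edges in between. -/
def graphJoin {α β : Type*} (G : SimpleGraph α) (H : SimpleGraph β) :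
    SimpleGraph (α ⊕ β) where
  Adj x y := match x, y with
    | Sum.inl a, Sum.inl b => G.Adj a b
    | Sum.inr a, Sum.inr b => H.Adj a b
    | _, _ => True
  symm := ⟨by rintro (a|a) (b|b) h <;> first | exact h.symm | trivial⟩
  loopless := ⟨by rintro (a|a) h <;> first | exact G.irrefl h | exact H.irrefl h⟩

/-- The disjoint union of two simple graphs. -/
def graphSum {α β : Type*} (G : SimpleGraph α) (H : SimpleGraph β) :
    SimpleGraph (α ⊕ β) where
  Adj x y := match x, y with
    | Sum.inl a, Sum.inl b => G.Adj a b
    | Sum.inr a, Sum.inr b => H.Adj a b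
    | _, _ => False
  symm := ⟨by rintro (a|a) (b|b) h <;> first | exact h.symm | trivial⟩
  loopless := ⟨by rintro (a|a) h <;> first | exact G.irrefl h | exact H.irrefl h⟩

/-- Disjoint union of blocks indexed by `ι`; block `i` has `r i` vertices and is a
clique when `P i` holds and a coclique (independent set) otherwise. -/
def blocksGraph {ι : Type*} (r : ι → ℕ) (P : ι → Prop) :
    SimpleGraph (Σ i, Fin (r i)) where
  Adj x y := x ≠ y ∧ x.1 = y.1 ∧ P x.1
  symm := ⟨by rintro x y ⟨h1, h2, h3⟩; exact ⟨h1.symm, h2.symm, h2 ▸ h3⟩⟩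
  loopless := ⟨fun x h => h.1 rfl⟩

/-!
A real symmetric matrix whose quadratic form is positive definite on some plane has two
positive eigenvalues: otherwise the form is nonpositive on a hyperplane, which meets the plane.
For a symmetric matrix `A` with zero diagonal, `t • eᵤ + eᵥ` and `eₓ + e_y` span such a plane
whenever `A u v > 0`, `A x y > 0`, `A u x = A u y = 0` and `t` is large. In `ε(G)` such vertices
exist once the diameter `D` is at least `3`: take a diametral pair `x, y` and the neighbour `b` of
`x` on a geodesic to `y`. If `e(b) = D`, take `u = b`. Otherwise `ε(b, y) = D - 1 > 0`, and `u`
is the neighbour of `y` on a geodesic to `b`, which has `e(u) ≥ D - 1 > 1 = d(u, y)`.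
-/

namespace SimpleGraph

variable {V : Type*} {G : SimpleGraph V}

lemma exists_adj_dist_eq_sub_one {u v : V} (h : G.dist u v ≠ 0) :
    ∃ w, G.Adj u w ∧ G.dist w v = G.dist u v - 1 := by
  obtain ⟨p, hp⟩ := exists_walk_of_dist_ne_zero h
  cases p with
  | nil => simp at h
  | @cons _ w _ hadj q =>
    refine ⟨w, hadj, le_antisymm ?_ ?_⟩
    · have := dist_le q
      rw [Walk.length_cons] at hp
      omega
    · have := hadj.reachable.dist_triangle_left v
      rw [dist_eq_one_iff_adj.mpr hadj] at this
      omega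

end SimpleGraph

namespace Matrix

variable {n : Type*} [Fintype n] {A : Matrix n n ℝ}

lemma IsHermitian.dotProduct_mulVec_comm (hA : A.IsHermitian) (v w : n → ℝ) :
    v ⬝ᵥ A *ᵥ w = w ⬝ᵥ A *ᵥ v := by
  rw [dotProduct_mulVec, ← mulVec_transpose, (isHermitian_iff_isSymm.mp hA).eq, dotProduct_comm]

variable [DecidableEq n]

lemma IsHermitian.dotProduct_mulVec_self_eq_sum (hA : A.IsHermitian) (v : n → ℝ) :
    v ⬝ᵥ A *ᵥ v =
      ∑ i, hA.eigenvalues i * ((star (hA.eigenvectorUnitary : Matrix n n ℝ) *ᵥ v) i) ^ 2 := by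
  set U : Matrix n n ℝ := ↑hA.eigenvectorUnitary
  have hvU : v ᵥ* U = star U *ᵥ v := by
    rw [← mulVec_transpose, star_eq_conjTranspose, conjTranspose_eq_transpose_of_trivial]
  have hsp := hA.spectral_theorem
  rw [RCLike.ofReal_real_eq_id, Unitary.conjStarAlgAut_apply] at hsp
  conv_lhs => rw [hsp, ← mulVec_mulVec, ← mulVec_mulVec, dotProduct_mulVec, hvU]
  simp only [dotProduct, mulVec_diagonal, Function.comp_apply, id, sq]
  exact Finset.sum_congr rfl fun i _ => by ring

lemma IsHermitian.exists_forall_dotProduct_mulVec_self_nonpos (hA : A.IsHermitian)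
    (h : posEigCount hA ≤ 1) :
    ∃ f : (n → ℝ) →ₗ[ℝ] ℝ, ∀ v, f v = 0 → v ⬝ᵥ A *ᵥ v ≤ 0 := by
  set S := Finset.univ.filter fun i => 0 < hA.eigenvalues i
  set U := star (hA.eigenvectorUnitary : Matrix n n ℝ) with hU
  refine ⟨∑ i ∈ S, (LinearMap.proj i).comp U.mulVecLin, fun v hv => ?_⟩
  have hcoord : ∀ i ∈ S, (U *ᵥ v) i = 0 := fun i hi => by
    rwa [LinearMap.sum_apply, Finset.sum_eq_single_of_mem i hi
      fun j hj hji => absurd (Finset.card_le_one.mp h j hj i hi) hji] at hv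
  rw [hA.dotProduct_mulVec_self_eq_sum, ← hU]
  refine Finset.sum_nonpos fun i _ => ?_
  by_cases hi : 0 < hA.eigenvalues i
  · simp [hcoord i (Finset.mem_filter.mpr ⟨Finset.mem_univ i, hi⟩)]
  · exact mul_nonpos_of_nonpos_of_nonneg (not_lt.mp hi) (sq_nonneg _)

lemma IsHermitian.two_le_posEigCount (hA : A.IsHermitian) (w₁ w₂ : n → ℝ)
    (h₁ : 0 < w₁ ⬝ᵥ A *ᵥ w₁)
    (h₁₂ : (w₁ ⬝ᵥ A *ᵥ w₂) ^ 2 < (w₁ ⬝ᵥ A *ᵥ w₁) * (w₂ ⬝ᵥ A *ᵥ w₂)) :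
    2 ≤ posEigCount hA := by
  by_contra! h
  obtain ⟨f, hf⟩ := hA.exists_forall_dotProduct_mulVec_self_nonpos (Nat.le_of_lt_succ h)
  set a := f w₁
  set b := f w₂
  have ha : a ≠ 0 := fun ha => (hf w₁ ha).not_gt h₁
  have hw : (b • w₁ - a • w₂) ⬝ᵥ A *ᵥ (b • w₁ - a • w₂) =
      b ^ 2 * (w₁ ⬝ᵥ A *ᵥ w₁) - 2 * a * b * (w₁ ⬝ᵥ A *ᵥ w₂) + a ^ 2 * (w₂ ⬝ᵥ A *ᵥ w₂) := by
    simp only [mulVec_sub, mulVec_smul, sub_dotProduct, dotProduct_sub, smul_dotProduct,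
      dotProduct_smul, smul_eq_mul, hA.dotProduct_mulVec_comm w₂ w₁]
    ring
  have hnonpos := hf (b • w₁ - a • w₂) (by simp only [map_sub, map_smul, smul_eq_mul]; ring)
  rw [hw] at hnonpos
  -- `Q w₁ * Q w = (b * Q w₁ - a * B w₁ w₂) ^ 2 + a ^ 2 * (Q w₁ * Q w₂ - B w₁ w₂ ^ 2) > 0`
  nlinarith [sq_nonneg (b * (w₁ ⬝ᵥ A *ᵥ w₁) - a * (w₁ ⬝ᵥ A *ᵥ w₂)), sq_pos_of_ne_zero ha]

lemma IsHermitian.two_le_posEigCount_of_entries (hA : A.IsHermitian) (hdiag : ∀ i, A i i = 0)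
    {u v x y : n} (hux : A u x = 0) (huy : A u y = 0) (huv : 0 < A u v) (hxy : 0 < A x y) :
    2 ≤ posEigCount hA := by
  have hentry : ∀ i j, Pi.single i 1 ⬝ᵥ A *ᵥ Pi.single j 1 = A i j := fun i j => by
    simp [mulVec_single, single_dotProduct]
  have hsymm : ∀ i j, A j i = A i j := fun i j => by simpa using hA.apply i j
  set s := A v x + A v y
  -- the Gram matrix of the two test vectors below is `!![2 * t * A u v, s; s, 2 * A x y]`
  set t := (s ^ 2 + 1) / (A u v * A x y)
  have ht : t * (A u v * A x y) = s ^ 2 + 1 := div_mul_cancel₀ _ (by positivity)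
  refine hA.two_le_posEigCount (t • Pi.single u 1 + Pi.single v 1)
    (Pi.single x 1 + Pi.single y 1) ?_ ?_ <;>
  simp only [mulVec_add, mulVec_smul, add_dotProduct, dotProduct_add, smul_dotProduct,
    dotProduct_smul, smul_eq_mul, hentry, hdiag, hsymm u v, hsymm x y, hux, huy]
  · have : 0 < t := by positivity
    positivity
  · nlinarith

end Matrix

section Eccentricity
variable {V : Type*} [Fintype V] (G : SimpleGraph V)

lemma dist_le_ecc (u v : V) : G.dist u v ≤ ecc G u :=
  Finset.le_sup (Finset.mem_univ v)

lemma dist_le_ecc_right (u v : V) : G.dist u v ≤ ecc G v :=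
  G.dist_comm ▸ dist_le_ecc G v u

lemma ecc_le_sup_ecc (u : V) : ecc G u ≤ Finset.univ.sup (ecc G) :=
  Finset.le_sup (Finset.mem_univ u)

lemma exists_dist_eq_ecc [Nonempty V] (u : V) : ∃ v, G.dist u v = ecc G u := by
  obtain ⟨v, -, hv⟩ := Finset.exists_mem_eq_sup Finset.univ Finset.univ_nonempty (G.dist u)
  exact ⟨v, hv.symm⟩

lemma eccMatrix_eq_zero_of_dist_lt {u v : V} (h : G.dist u v < min (ecc G u) (ecc G v)) :
    eccMatrix G u v = 0 :=
  if_neg h.ne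

lemma eccMatrix_pos_of_dist_eq {u v : V} (h : G.dist u v = min (ecc G u) (ecc G v))
    (h0 : 0 < G.dist u v) :
    0 < eccMatrix G u v := by
  rw [eccMatrix, if_pos h]
  exact_mod_cast h0

lemma eccMatrix_self (u : V) : eccMatrix G u u = 0 := by
  simp [eccMatrix]

lemma exists_eccMatrix_pos [Nonempty V] {u : V} (hu : 0 < ecc G u) :
    ∃ v, 0 < eccMatrix G u v := by
  obtain ⟨v, hv⟩ := exists_dist_eq_ecc G u
  have := dist_le_ecc_right G u v
  exact ⟨v, eccMatrix_pos_of_dist_eq G (by omega) (by omega)⟩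

lemma exists_dist_eq_sup_ecc [Nonempty V] :
    ∃ x y, G.dist x y = Finset.univ.sup (ecc G) ∧ ecc G x = Finset.univ.sup (ecc G) ∧
      ecc G y = Finset.univ.sup (ecc G) := by
  obtain ⟨x, -, hx⟩ := Finset.exists_mem_eq_sup Finset.univ Finset.univ_nonempty (ecc G)
  obtain ⟨y, hy⟩ := exists_dist_eq_ecc G x
  have := dist_le_ecc_right G x y
  have := ecc_le_sup_ecc G y
  exact ⟨x, y, by omega, hx.symm, by omega⟩

variable {G} in
lemma exists_eccMatrix_entries_of_three_le_sup_ecc (hG : G.Connected)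
    (hdiam : 3 ≤ Finset.univ.sup (ecc G)) :
    ∃ u v x y, eccMatrix G u x = 0 ∧ eccMatrix G u y = 0 ∧
      0 < eccMatrix G u v ∧ 0 < eccMatrix G x y := by
  have := hG.nonempty
  obtain ⟨x, y, hxy, hx, hy⟩ := exists_dist_eq_sup_ecc G
  obtain ⟨b, hxb, hby⟩ := SimpleGraph.exists_adj_dist_eq_sub_one (by omega : G.dist x y ≠ 0)
  have hbx : G.dist b x = 1 := SimpleGraph.dist_eq_one_iff_adj.mpr hxb.symm
  have := dist_le_ecc G b y
  have := ecc_le_sup_ecc G b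
  rcases (by omega : ecc G b = ecc G x ∨ ecc G b + 1 = ecc G x) with hb | hb
  · obtain ⟨v, hv⟩ := exists_eccMatrix_pos G (u := b) (by omega)
    exact ⟨b, v, x, y, eccMatrix_eq_zero_of_dist_lt G (by omega),
      eccMatrix_eq_zero_of_dist_lt G (by omega), hv,
      eccMatrix_pos_of_dist_eq G (by omega) (by omega)⟩
  · obtain ⟨c, hyc, hcb⟩ :=
      SimpleGraph.exists_adj_dist_eq_sub_one (by rw [G.dist_comm]; omega : G.dist y b ≠ 0)
    have hcy : G.dist c y = 1 := SimpleGraph.dist_eq_one_iff_adj.mpr hyc.symm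
    have := hG.dist_triangle (u := x) (v := c) (w := y)
    have := dist_le_ecc_right G x c
    rw [G.dist_comm (u := y) (v := b)] at hcb
    obtain ⟨v, hv⟩ := exists_eccMatrix_pos G (u := c) (by omega)
    exact ⟨c, v, b, y, eccMatrix_eq_zero_of_dist_lt G (by omega),
      eccMatrix_eq_zero_of_dist_lt G (by omega), hv,
      eccMatrix_pos_of_dist_eq G (by omega) (by omega)⟩

end Eccentricity

theorem stmt2_general {V : Type*} [Fintype V] [DecidableEq V] (G : SimpleGraph V)
    (hconn : G.Connected) (hdiam : 3 ≤ Finset.univ.sup (ecc G)) :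
    2 ≤ posEigCount (eccMatrix_isHermitian G) := by
  obtain ⟨u, v, x, y, hux, huy, huv, hxy⟩ :=
    exists_eccMatrix_entries_of_three_le_sup_ecc hconn hdiam
  exact (eccMatrix_isHermitian G).two_le_posEigCount_of_entries (eccMatrix_self G) hux huy huv hxy

/-- a connected graph with diameter at least 3 that is not self-centered
has at least two positive eccentricity eigenvalues. -/
theorem stmt2 {V : Type*} [Fintype V] [DecidableEq V] (G : SimpleGraph V)
    (hconn : G.Connected) (hdiam : 3 ≤ Finset.univ.sup (ecc G))
    (hnsc : sInf (Set.range (ecc G)) < Finset.univ.sup (ecc G)) :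
    2 ≤ posEigCount (eccMatrix_isHermitian G) :=
  stmt2_general G hconn hdiam
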